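/- arXiv:2403.16626 — 2 statements merged into one kernel-verified Lean document; each statement's English description precedes it below -/
import Mathlib

section
/- Between any two ipomsets there is at most one isomorphism; that is, if f and g are both isomorphisms of ipomsets from P to Q, then f = g. -/
set_option maxHeartbeats 1000000

universe u v w

/-- An ipomset over event universe `E` and alphabet `A`:
a finite set of events with a precedence order `lt`, an event order `evord`,
source and target sets, and a labeling. -/
structure Ipomset (E : Type u) (A : Type v) where
  events : Finset E
  lt : E → E → Prop
  evord : E → E → Prop
  src : Finset E
  tgt : Finset E
  lab : E → A
  lt_mem : ∀ {x y}, lt x y → x ∈ events ∧ y ∈ events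
  evord_mem : ∀ {x y}, evord x y → x ∈ events ∧ y ∈ events
  lt_irrefl : ∀ x, ¬ lt x x
  lt_trans : ∀ {x y z}, lt x y → lt y z → lt x z
  evord_irrefl : ∀ x, ¬ evord x x
  evord_trans : ∀ {x y z}, evord x y → evord y z → evord x z
  order_total : ∀ {x y}, x ∈ events → y ∈ events → x ≠ y →
      lt x y ∨ lt y x ∨ evord x y ∨ evord y x
  src_sub : src ⊆ events
  tgt_sub : tgt ⊆ events
  src_min : ∀ {x y}, x ∈ src → ¬ lt y x
  tgt_max : ∀ {x y}, x ∈ tgt → ¬ lt x y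

namespace Ipomset

variable {E : Type u} {A : Type v}

/-- An ipomset is interval if its precedence order admits an interval representation. -/
def Interval (P : Ipomset E A) : Prop :=
  ∃ b e : E → ℝ, (∀ x ∈ P.events, b x ≤ e x) ∧
    ∀ x ∈ P.events, ∀ y ∈ P.events, (P.lt x y ↔ e x < b y)

/-- Discrete: empty precedence order. -/
def Discrete (P : Ipomset E A) : Prop := ∀ x y, ¬ P.lt x y

/-- A starter is a discrete ipomset with `tgt = events`. -/
def Starter (P : Ipomset E A) : Prop := P.Discrete ∧ P.tgt = P.events

/-- A terminator is a discrete ipomset with `src = events`. -/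
def Terminator (P : Ipomset E A) : Prop := P.Discrete ∧ P.src = P.events

/-- An identity is a discrete ipomset with `src = tgt = events`. -/
def IsIdentity (P : Ipomset E A) : Prop :=
  P.Discrete ∧ P.src = P.events ∧ P.tgt = P.events

end Ipomset

/-- A conclist: a finite set with a strict total order (the event order) and labeling. -/
structure Conclist (E : Type u) (A : Type v) where
  events : Finset E
  evord : E → E → Prop
  lab : E → Option A
  evord_mem : ∀ {x y}, evord x y → x ∈ events ∧ y ∈ events
  evord_irrefl : ∀ x, ¬ evord x x
  evord_trans : ∀ {x y z}, evord x y → evord y z → evord x z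
  evord_total : ∀ {x y}, x ∈ events → y ∈ events → x ≠ y → evord x y ∨ evord y x

variable {E : Type u} {A : Type v}

/-- The source interface of an ipomset: the conclist on its source set. -/
def Ipomset.srcIface [DecidableEq E] (P : Ipomset E A) : Conclist E A where
  events := P.src
  evord x y := x ∈ P.src ∧ y ∈ P.src ∧ P.evord x y
  lab x := if x ∈ P.src then some (P.lab x) else none
  evord_mem h := ⟨h.1, h.2.1⟩
  evord_irrefl x h := P.evord_irrefl x h.2.2
  evord_trans h1 h2 := ⟨h1.1, h2.2.1, P.evord_trans h1.2.2 h2.2.2⟩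
  evord_total {x y} hx hy hxy := by
    rcases P.order_total (P.src_sub hx) (P.src_sub hy) hxy with h | h | h | h
    · exact absurd h (P.src_min hy)
    · exact absurd h (P.src_min hx)
    · exact Or.inl ⟨hx, hy, h⟩
    · exact Or.inr ⟨hy, hx, h⟩

/-- The target interface of an ipomset: the conclist on its target set. -/
def Ipomset.tgtIface [DecidableEq E] (P : Ipomset E A) : Conclist E A where
  events := P.tgt
  evord x y := x ∈ P.tgt ∧ y ∈ P.tgt ∧ P.evord x y
  lab x := if x ∈ P.tgt then some (P.lab x) else none
  evord_mem h := ⟨h.1, h.2.1⟩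
  evord_irrefl x h := P.evord_irrefl x h.2.2
  evord_trans h1 h2 := ⟨h1.1, h2.2.1, P.evord_trans h1.2.2 h2.2.2⟩
  evord_total {x y} hx hy hxy := by
    rcases P.order_total (P.tgt_sub hx) (P.tgt_sub hy) hxy with h | h | h | h
    · exact absurd h (P.tgt_max hx)
    · exact absurd h (P.tgt_max hy)
    · exact Or.inl ⟨hx, hy, h⟩
    · exact Or.inr ⟨hy, hx, h⟩

/-- `f` is an isomorphism of ipomsets from `P` to `Q`. -/
structure IsIpoIso (P Q : Ipomset E A) (f : E → E) : Prop where
  maps : ∀ x ∈ P.events, f x ∈ Q.events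
  inj : ∀ x ∈ P.events, ∀ y ∈ P.events, f x = f y → x = y
  surj : ∀ y ∈ Q.events, ∃ x ∈ P.events, f x = y
  src_iff : ∀ x ∈ P.events, (x ∈ P.src ↔ f x ∈ Q.src)
  tgt_iff : ∀ x ∈ P.events, (x ∈ P.tgt ↔ f x ∈ Q.tgt)
  lab_eq : ∀ x ∈ P.events, Q.lab (f x) = P.lab x
  lt_iff : ∀ x ∈ P.events, ∀ y ∈ P.events, (Q.lt (f x) (f y) ↔ P.lt x y)
  evord_iff : ∀ x ∈ P.events, ∀ y ∈ P.events, ¬ P.lt x y → ¬ P.lt y x →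
      (P.evord x y ↔ Q.evord (f x) (f y))

/-- `P ≅ Q`: there is an isomorphism of ipomsets from `P` to `Q`. -/
def IpoIso (P Q : Ipomset E A) : Prop := ∃ f, IsIpoIso P Q f

/-- `f` is a subsumption of ipomsets from `P` to `Q`. -/
structure IsSubsumption (P Q : Ipomset E A) (f : E → E) : Prop where
  maps : ∀ x ∈ P.events, f x ∈ Q.events
  inj : ∀ x ∈ P.events, ∀ y ∈ P.events, f x = f y → x = y
  surj : ∀ y ∈ Q.events, ∃ x ∈ P.events, f x = y
  src_iff : ∀ x ∈ P.events, (x ∈ P.src ↔ f x ∈ Q.src)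
  tgt_iff : ∀ x ∈ P.events, (x ∈ P.tgt ↔ f x ∈ Q.tgt)
  lab_eq : ∀ x ∈ P.events, Q.lab (f x) = P.lab x
  lt_imp : ∀ x ∈ P.events, ∀ y ∈ P.events, Q.lt (f x) (f y) → P.lt x y
  evord_imp : ∀ x ∈ P.events, ∀ y ∈ P.events, ¬ P.lt x y → ¬ P.lt y x →
      P.evord x y → Q.evord (f x) (f y)

/-- `P ⊑ Q`: there is a subsumption from `P` to `Q`. -/
def Subsumes (P Q : Ipomset E A) : Prop := ∃ f, IsSubsumption P Q f

/-- `P ⊏ Q`: `P ⊑ Q` and `P` and `Q` are not isomorphic. -/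
def StrictSubsumes (P Q : Ipomset E A) : Prop := Subsumes P Q ∧ ¬ IpoIso P Q

/-- `f` is an isomorphism of conclists from `U` to `V`. -/
structure IsClIso (U V : Conclist E A) (f : E → E) : Prop where
  maps : ∀ x ∈ U.events, f x ∈ V.events
  inj : ∀ x ∈ U.events, ∀ y ∈ U.events, f x = f y → x = y
  surj : ∀ y ∈ V.events, ∃ x ∈ U.events, f x = y
  lab_eq : ∀ x ∈ U.events, V.lab (f x) = U.lab x
  evord_iff : ∀ x ∈ U.events, ∀ y ∈ U.events, (U.evord x y ↔ V.evord (f x) (f y))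

/-- `U ≅ V` for conclists. -/
def ClIso (U V : Conclist E A) : Prop := ∃ f, IsClIso U V f

/-- `P` and `Q` are composable representatives: the target interface of `P` coincides
with the source interface of `Q` and is exactly the overlap of the event sets. -/
def Composable [DecidableEq E] (P Q : Ipomset E A) : Prop :=
  P.tgtIface = Q.srcIface ∧ P.events ∩ Q.events = P.tgt

/-- One step of the glued precedence order. -/
def glueStep (P Q : Ipomset E A) (x y : E) : Prop :=
  P.lt x y ∨ Q.lt x y ∨
    (x ∈ P.events ∧ x ∉ P.tgt ∧ y ∈ Q.events ∧ y ∉ Q.src)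

/-- The glued precedence order: transitive closure. -/
def glueLt (P Q : Ipomset E A) : E → E → Prop :=
  Relation.TransGen (glueStep P Q)

/-- The glued event order: the union of the two event orders. -/
def glueEvord (P Q : Ipomset E A) (x y : E) : Prop :=
  P.evord x y ∨ Q.evord x y

/-- `R` is the gluing of the composable representatives `P` and `Q`. -/
def IsGlueOf [DecidableEq E] (P Q R : Ipomset E A) : Prop :=
  Composable P Q ∧
  R.events = P.events ∪ Q.events ∧
  (∀ x y, R.lt x y ↔ glueLt P Q x y) ∧
  (∀ x y, R.evord x y ↔ glueEvord P Q x y) ∧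
  R.src = P.src ∧ R.tgt = Q.tgt ∧
  (∀ x ∈ P.events, R.lab x = P.lab x) ∧
  (∀ x ∈ Q.events, R.lab x = Q.lab x)

/-- `R ≅ P * Q`: up to isomorphism, `R` is the gluing of `P` and `Q`. -/
def IsGluing [DecidableEq E] (P Q R : Ipomset E A) : Prop :=
  ∃ P' Q' R', IpoIso P P' ∧ IpoIso Q Q' ∧ IpoIso R R' ∧ IsGlueOf P' Q' R'

/-- A letter of a step sequence: a starter or a terminator. -/
def StepLetter (P : Ipomset E A) : Prop := P.Starter ∨ P.Terminator

/-- A word of starters and terminators is coherent if consecutive interfaces match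
(as isomorphism classes of conclists). -/
def Coherent [DecidableEq E] (w : List (Ipomset E A)) : Prop :=
  (∀ P ∈ w, StepLetter P) ∧
  w.Chain' (fun P Q => ClIso P.tgtIface Q.srcIface)

/-- The congruence `~` on coherent words: generated by composing two subsequent
starters or two subsequent terminators, removing/inserting identities, and
replacing letters by isomorphic ones. -/
inductive StepEquiv {E : Type u} {A : Type v} [DecidableEq E] :
    List (Ipomset E A) → List (Ipomset E A) → Prop
  | glue (u v : List (Ipomset E A)) (P Q R : Ipomset E A) :
      Coherent (u ++ P :: Q :: v) →
      ((P.Starter ∧ Q.Starter) ∨ (P.Terminator ∧ Q.Terminator)) →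
      IsGluing P Q R →
      StepEquiv (u ++ P :: Q :: v) (u ++ R :: v)
  | ident (u v : List (Ipomset E A)) (P : Ipomset E A) :
      Coherent (u ++ P :: v) → P.IsIdentity → u ++ v ≠ [] →
      StepEquiv (u ++ P :: v) (u ++ v)
  | iso (u v : List (Ipomset E A)) (P Q : Ipomset E A) :
      Coherent (u ++ P :: v) → IpoIso P Q →
      StepEquiv (u ++ P :: v) (u ++ Q :: v)
  | refl (w : List (Ipomset E A)) : StepEquiv w w
  | symm {w₁ w₂ : List (Ipomset E A)} : StepEquiv w₁ w₂ → StepEquiv w₂ w₁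
  | trans {w₁ w₂ w₃ : List (Ipomset E A)} :
      StepEquiv w₁ w₂ → StepEquiv w₂ w₃ → StepEquiv w₁ w₃

/-- `R` is (up to isomorphism) the gluing `P₁ * ⋯ * Pₙ` of the word `w = P₁ ⋯ Pₙ`. -/
inductive GlueWord {E : Type u} {A : Type v} [DecidableEq E] :
    List (Ipomset E A) → Ipomset E A → Prop
  | single (P : Ipomset E A) : GlueWord [P] P
  | cons (P : Ipomset E A) (w : List (Ipomset E A)) (R S : Ipomset E A) :
      GlueWord w R → IsGluing P R S → GlueWord (P :: w) S

/-- The discrete ipomset on sub-conclist `V` of the discrete ipomset `W`,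
with sources `S` and targets `T`. -/
def letterOf [DecidableEq E] (W : Ipomset E A) (hW : W.Discrete)
    (V S T : Finset E) : Ipomset E A where
  events := V ∩ W.events
  lt _ _ := False
  evord x y := x ∈ V ∩ W.events ∧ y ∈ V ∩ W.events ∧ W.evord x y
  src := S ∩ (V ∩ W.events)
  tgt := T ∩ (V ∩ W.events)
  lab := W.lab
  lt_mem h := h.elim
  evord_mem h := ⟨h.1, h.2.1⟩
  lt_irrefl _ h := h
  lt_trans h := h.elim
  evord_irrefl x h := W.evord_irrefl x h.2.2
  evord_trans h1 h2 := ⟨h1.1, h2.2.1, W.evord_trans h1.2.2 h2.2.2⟩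
  order_total {x y} hx hy hxy := by
    rcases W.order_total (Finset.mem_inter.mp hx).2 (Finset.mem_inter.mp hy).2 hxy
      with h | h | h | h
    · exact absurd h (hW _ _)
    · exact absurd h (hW _ _)
    · exact Or.inr (Or.inr (Or.inl ⟨hx, hy, h⟩))
    · exact Or.inr (Or.inr (Or.inr ⟨hy, hx, h⟩))
  src_sub := Finset.inter_subset_right
  tgt_sub := Finset.inter_subset_right
  src_min _ h := h
  tgt_max _ h := h

/-- `V↑B`: the starter on the conclist `V` (inside `W`) starting the events of `B`. -/
def upOn [DecidableEq E] (W : Ipomset E A) (hW : W.Discrete) (V B : Finset E) :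
    Ipomset E A :=
  letterOf W hW V (V \ B) V

/-- `V↓B`: the terminator on the conclist `V` (inside `W`) terminating the events of `B`. -/
def downOn [DecidableEq E] (W : Ipomset E A) (hW : W.Discrete) (V B : Finset E) :
    Ipomset E A :=
  letterOf W hW V V (V \ B)

/-- The transposition relation: `TranspAt w w'` holds iff `w' = τᵢ(w)` for some `i`. -/
inductive TranspAt {E : Type u} {A : Type v} [DecidableEq E] :
    List (Ipomset E A) → List (Ipomset E A) → Prop
  | ss (u v : List (Ipomset E A)) (W : Ipomset E A) (hW : W.Discrete)
      (Aa Bb : Finset E) (hA : Aa ⊆ W.events) (hB : Bb ⊆ W.events)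
      (hd : Disjoint Aa Bb) :
      TranspAt (u ++ upOn W hW (W.events \ Bb) Aa :: upOn W hW W.events Bb :: v)
               (u ++ upOn W hW (W.events \ Aa) Bb :: upOn W hW W.events Aa :: v)
  | tt (u v : List (Ipomset E A)) (W : Ipomset E A) (hW : W.Discrete)
      (Aa Bb : Finset E) (hA : Aa ⊆ W.events) (hB : Bb ⊆ W.events)
      (hd : Disjoint Aa Bb) :
      TranspAt (u ++ downOn W hW W.events Aa :: downOn W hW (W.events \ Aa) Bb :: v)
               (u ++ downOn W hW W.events Bb :: downOn W hW (W.events \ Bb) Aa :: v)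
  | st (u v : List (Ipomset E A)) (W : Ipomset E A) (hW : W.Discrete)
      (Aa Bb : Finset E) (hA : Aa ⊆ W.events) (hB : Bb ⊆ W.events)
      (hd : Disjoint Aa Bb) :
      TranspAt (u ++ upOn W hW W.events Aa :: downOn W hW W.events Bb :: v)
               (u ++ downOn W hW (W.events \ Aa) Bb :: upOn W hW (W.events \ Bb) Aa :: v)
  | ts (u v : List (Ipomset E A)) (W : Ipomset E A) (hW : W.Discrete)
      (Aa Bb : Finset E) (hA : Aa ⊆ W.events) (hB : Bb ⊆ W.events)
      (hd : Disjoint Aa Bb) :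
      TranspAt (u ++ downOn W hW (W.events \ Bb) Aa :: upOn W hW (W.events \ Aa) Bb :: v)
               (u ++ upOn W hW W.events Bb :: downOn W hW W.events Aa :: v)

/-- A word is dense if every letter starts or terminates exactly one event. -/
def DenseWord [DecidableEq E] (w : List (Ipomset E A)) : Prop :=
  ∀ P ∈ w, (P.Starter ∧ (P.events \ P.src).card = 1) ∨
    (P.Terminator ∧ (P.events \ P.tgt).card = 1)

/-- There is a chain of transpositions from `w₁` to `w₂` through dense coherent words
all satisfying `pred`. -/
def TranspChain [DecidableEq E] (pred : List (Ipomset E A) → Prop)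
    (w₁ w₂ : List (Ipomset E A)) : Prop :=
  ∃ us : List (List (Ipomset E A)),
    us.head? = some w₁ ∧ us.getLast? = some w₂ ∧
    us.Chain' TranspAt ∧ ∀ u ∈ us, DenseWord u ∧ Coherent u ∧ pred u

/-- A word is sparse if it is a single identity, or its letters are non-identity
starters and terminators which strictly alternate. -/
def SparseWord [DecidableEq E] (w : List (Ipomset E A)) : Prop :=
  (∃ P, w = [P] ∧ P.IsIdentity) ∨
  ((∀ P ∈ w, StepLetter P ∧ ¬ P.IsIdentity) ∧
    w.Chain' (fun P Q => (P.Starter ∧ Q.Terminator) ∨ (P.Terminator ∧ Q.Starter)))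

/-- `w` is THE sparse step decomposition of `P` (up to the chosen representatives). -/
def SparseDecomp [DecidableEq E] (P : Ipomset E A) (w : List (Ipomset E A)) : Prop :=
  SparseWord w ∧ Coherent w ∧ ∃ R, GlueWord w R ∧ IpoIso R P

/-- The transposition exchanging a starter followed by a terminator
(third case of the definition of transpositions): `TranspST w tw` iff `tw = τᵢ(w)`
where the `i`-th factor of `w` is `U↑A · U↓B`. -/
def TranspST [DecidableEq E] (w tw : List (Ipomset E A)) : Prop :=
  ∃ (u v : List (Ipomset E A)) (W : Ipomset E A) (hW : W.Discrete)
    (Aa Bb : Finset E), Aa ⊆ W.events ∧ Bb ⊆ W.events ∧ Disjoint Aa Bb ∧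
    w = u ++ upOn W hW W.events Aa :: downOn W hW W.events Bb :: v ∧
    tw = u ++ downOn W hW (W.events \ Aa) Bb :: upOn W hW (W.events \ Bb) Aa :: v

/-- `w₂ <ₑ w₁` on step sequences: some representative of `w₂` is obtained from a
representative of `w₁` by a starter-terminator transposition. -/
def LtE [DecidableEq E] (w₂ w₁ : List (Ipomset E A)) : Prop :=
  ∃ w₁' w₂', StepEquiv w₁ w₁' ∧ StepEquiv w₂ w₂' ∧ TranspST w₁' w₂'

/-- `≤`: the reflexive-transitive closure of `<ₑ` on step sequences. -/
def StepLe [DecidableEq E] (w₁ w₂ : List (Ipomset E A)) : Prop :=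
  Relation.ReflTransGen (fun x y => LtE x y ∨ StepEquiv x y) w₁ w₂

/-- A higher-dimensional automaton: cells labelled by conclists (identity ipomsets),
face maps satisfying the precubical identities, start and accept cells. -/
structure HDA (X : Type w) (E : Type u) (A : Type v) [DecidableEq E] where
  ev : X → Ipomset E A
  ev_id : ∀ q, (ev q).IsIdentity
  face : Bool → Finset E → X → X
  face_ev : ∀ (b : Bool) (B : Finset E) (q : X), B ⊆ (ev q).events →
    ev (face b B q) =
      letterOf (ev q) (ev_id q).1 ((ev q).events \ B) ((ev q).events \ B)
        ((ev q).events \ B)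
  face_comm : ∀ (b c : Bool) (B C : Finset E) (q : X), Disjoint B C →
    B ⊆ (ev q).events → C ⊆ (ev q).events →
    face b B (face c C q) = face c C (face b B q)
  start : Set X
  accept : Set X

/-- Paths in an HDA, together with their event words (interleaving identities). -/
inductive HPath {X : Type w} {E : Type u} {A : Type v} [DecidableEq E]
    (H : HDA X E A) : X → X → List (Ipomset E A) → Prop
  | nil (q : X) : HPath H q q [H.ev q]
  | up (q p r : X) (w : List (Ipomset E A)) (B : Finset E)
      (hB : B ⊆ (H.ev p).events) :
      q = H.face false B p → HPath H p r w →
      HPath H q r (upOn (H.ev p) (H.ev_id p).1 (H.ev p).events B :: w)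
  | down (p q r : X) (w : List (Ipomset E A)) (B : Finset E)
      (hB : B ⊆ (H.ev p).events) :
      q = H.face true B p → HPath H q r w →
      HPath H p r (downOn (H.ev p) (H.ev_id p).1 (H.ev p).events B :: w)

/-- The language of an HDA: event ipomsets of accepting paths, closed under iso. -/
def HLang {X : Type w} [DecidableEq E] (H : HDA X E A) : Set (Ipomset E A) :=
  {P | ∃ q r w R, q ∈ H.start ∧ r ∈ H.accept ∧ HPath H q r w ∧
    GlueWord w R ∧ IpoIso R P}

/-- An ST-automaton: states labelled by conclists (identity ipomsets), edges labelled
by starters and terminators consistently with the state labels. -/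
structure STAut (Q : Type w) (E : Type u) (A : Type v) [DecidableEq E] where
  lab : Q → Ipomset E A
  lab_id : ∀ q, (lab q).IsIdentity
  edge : Q → Ipomset E A → Q → Prop
  edge_st : ∀ {q P r}, edge q P r → StepLetter P
  edge_src : ∀ {q P r}, edge q P r → P.srcIface = (lab q).srcIface
  edge_tgt : ∀ {q P r}, edge q P r → P.tgtIface = (lab r).srcIface
  start : Set Q
  accept : Set Q

/-- Paths in an ST-automaton together with their labels
`id_{λ(q₀)} P₁ id_{λ(q₁)} ⋯ Pₙ id_{λ(qₙ)}`. -/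
inductive STPath {Q : Type w} {E : Type u} {A : Type v} [DecidableEq E]
    (S : STAut Q E A) : Q → Q → List (Ipomset E A) → Prop
  | nil (q : Q) : STPath S q q [S.lab q]
  | cons (q p r : Q) (P : Ipomset E A) (w : List (Ipomset E A)) :
      S.edge q P p → STPath S p r w → STPath S q r (S.lab q :: P :: w)

/-- The language of an ST-automaton: the `~`-classes of labels of accepting paths
(as a `~`-saturated set of words). -/
def STLang {Q : Type w} [DecidableEq E] (S : STAut Q E A) :
    Set (List (Ipomset E A)) :=
  {w | ∃ q r w', q ∈ S.start ∧ r ∈ S.accept ∧ STPath S q r w' ∧ StepEquiv w w'}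

/-- `S` is the ST-automaton `ST(X)` associated to the HDA `H`. -/
def IsSTof {X : Type w} [DecidableEq E] (H : HDA X E A) (S : STAut X E A) : Prop :=
  S.lab = H.ev ∧ S.start = H.start ∧ S.accept = H.accept ∧
  ∀ q P r, S.edge q P r ↔
    ((∃ B, ∃ _ : B ⊆ (H.ev r).events, q = H.face false B r ∧
        P = upOn (H.ev r) (H.ev_id r).1 (H.ev r).events B) ∨
     (∃ B, ∃ _ : B ⊆ (H.ev q).events, r = H.face true B q ∧
        P = downOn (H.ev q) (H.ev_id q).1 (H.ev q).events B))

/-- The image of a set of ipomsets under `Φ` (sparse step decomposition),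
as a `~`-saturated set of words. -/
def PhiImage [DecidableEq E] (L : Set (Ipomset E A)) : Set (List (Ipomset E A)) :=
  {w | ∃ P ∈ L, ∃ w', SparseDecomp P w' ∧ StepEquiv w w'}

/-- The image of a set of words under `Ψ` (gluing), as an iso-saturated set of ipomsets. -/
def PsiImage [DecidableEq E] (L : Set (List (Ipomset E A))) : Set (Ipomset E A) :=
  {P | ∃ w ∈ L, ∃ R, GlueWord w R ∧ IpoIso R P}

/-- `H` together with `ι` realizes the HDA `HD(S)` obtained from the ST-automaton `S`:
cells of `S` embed via `ι` compatibly with labels, start/accept cells, and each edge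
of `S` is realized by a face map of `H`. -/
def SimulatesST {Q : Type w} {X : Type w} [DecidableEq E]
    (S : STAut Q E A) (H : HDA X E A) (ι : Q → X) : Prop :=
  (∀ q, H.ev (ι q) = S.lab q) ∧
  (∀ q ∈ S.start, ι q ∈ H.start) ∧
  (∀ q ∈ S.accept, ι q ∈ H.accept) ∧
  ∀ q P r, S.edge q P r →
    ((∃ B, ∃ _ : B ⊆ (H.ev (ι r)).events, ι q = H.face false B (ι r) ∧
        P = upOn (H.ev (ι r)) (H.ev_id (ι r)).1 (H.ev (ι r)).events B) ∨
     (∃ B, ∃ _ : B ⊆ (H.ev (ι q)).events, ι r = H.face true B (ι q) ∧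
        P = downOn (H.ev (ι q)) (H.ev_id (ι q)).1 (H.ev (ι q)).events B))

open scoped Classical in
/-- The set of strict predecessors of `x` in `P`. -/
noncomputable def preS (P : Ipomset E A) (x : E) : Finset E :=
  P.events.filter (fun z => P.lt z x)

open scoped Classical in
/-- The set of strict successors of `x` in `P`. -/
noncomputable def sucS (P : Ipomset E A) (x : E) : Finset E :=
  P.events.filter (fun z => P.lt x z)

lemma mem_preS {P : Ipomset E A} {x z : E} :
    z ∈ preS P x ↔ z ∈ P.events ∧ P.lt z x := by
  simp [preS]

lemma mem_sucS {P : Ipomset E A} {x z : E} :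
    z ∈ sucS P x ↔ z ∈ P.events ∧ P.lt x z := by
  simp [sucS]

/-- The canonical linear order on the events of an interval ipomset. -/
def linOrd (P : Ipomset E A) (x y : E) : Prop :=
  preS P x ⊂ preS P y ∨
  (preS P x = preS P y ∧ sucS P y ⊂ sucS P x) ∨
  (preS P x = preS P y ∧ sucS P x = sucS P y ∧ P.evord x y)

lemma linOrd_irrefl (P : Ipomset E A) (x : E) : ¬ linOrd P x x := by
  rintro (h | ⟨-, h⟩ | ⟨-, -, h⟩)
  · exact ssubset_irrefl _ h
  · exact ssubset_irrefl _ h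
  · exact P.evord_irrefl x h

lemma linOrd_trans (P : Ipomset E A) {x y z : E}
    (h1 : linOrd P x y) (h2 : linOrd P y z) : linOrd P x z := by
  rcases h1 with h1 | ⟨e1, h1⟩ | ⟨e1, e1', h1⟩ <;>
    rcases h2 with h2 | ⟨e2, h2⟩ | ⟨e2, e2', h2⟩
  · exact Or.inl (h1.trans h2)
  · exact Or.inl (e2 ▸ h1)
  · exact Or.inl (e2 ▸ h1)
  · exact Or.inl (e1 ▸ h2)
  · exact Or.inr (Or.inl ⟨e1.trans e2, h2.trans h1⟩)
  · exact Or.inr (Or.inl ⟨e1.trans e2, e2' ▸ h1⟩)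
  · exact Or.inl (e1 ▸ h2)
  · exact Or.inr (Or.inl ⟨e1.trans e2, e1' ▸ h2⟩)
  · exact Or.inr (Or.inr ⟨e1.trans e2, e1'.trans e2', P.evord_trans h1 h2⟩)

lemma linOrd_asymm (P : Ipomset E A) {x y : E}
    (h1 : linOrd P x y) (h2 : linOrd P y x) : False :=
  linOrd_irrefl P x (linOrd_trans P h1 h2)

lemma not_lt_of_sucS_eq {P : Ipomset E A} {x y : E} (hy : y ∈ P.events)
    (h : sucS P x = sucS P y) : ¬ P.lt x y := fun hlt =>
  P.lt_irrefl y (mem_sucS.mp (h ▸ mem_sucS.mpr ⟨hy, hlt⟩)).2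

lemma not_lt_of_preS_eq {P : Ipomset E A} {x y : E} (hy : y ∈ P.events)
    (h : preS P x = preS P y) : ¬ P.lt y x := fun hlt =>
  P.lt_irrefl y (mem_preS.mp (h ▸ mem_preS.mpr ⟨hy, hlt⟩)).2

lemma linOrd_total (P : Ipomset E A) (hP : P.Interval) {x y : E}
    (hx : x ∈ P.events) (hy : y ∈ P.events) (hxy : x ≠ y) :
    linOrd P x y ∨ linOrd P y x := by
  obtain ⟨b, e, _, hlt⟩ := hP
  have hpre : preS P x ⊆ preS P y ∨ preS P y ⊆ preS P x := by
    rcases le_total (b x) (b y) with h | h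
    · exact Or.inl fun z hz => by
        rcases mem_preS.mp hz with ⟨hze, hzl⟩
        exact mem_preS.mpr ⟨hze, (hlt z hze y hy).mpr
          (lt_of_lt_of_le ((hlt z hze x hx).mp hzl) h)⟩
    · exact Or.inr fun z hz => by
        rcases mem_preS.mp hz with ⟨hze, hzl⟩
        exact mem_preS.mpr ⟨hze, (hlt z hze x hx).mpr
          (lt_of_lt_of_le ((hlt z hze y hy).mp hzl) h)⟩
  have hsuc : sucS P x ⊆ sucS P y ∨ sucS P y ⊆ sucS P x := by
    rcases le_total (e y) (e x) with h | h
    · exact Or.inl fun z hz => by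
        rcases mem_sucS.mp hz with ⟨hze, hzl⟩
        exact mem_sucS.mpr ⟨hze, (hlt y hy z hze).mpr
          (lt_of_le_of_lt h ((hlt x hx z hze).mp hzl))⟩
    · exact Or.inr fun z hz => by
        rcases mem_sucS.mp hz with ⟨hze, hzl⟩
        exact mem_sucS.mpr ⟨hze, (hlt x hx z hze).mpr
          (lt_of_le_of_lt h ((hlt y hy z hze).mp hzl))⟩
  by_cases hpe : preS P x = preS P y
  · by_cases hse : sucS P x = sucS P y
    · rcases P.order_total hx hy hxy with h | h | h | h
      · exact absurd h (not_lt_of_sucS_eq hy hse)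
      · exact absurd h (not_lt_of_preS_eq hy hpe)
      · exact Or.inl (Or.inr (Or.inr ⟨hpe, hse, h⟩))
      · exact Or.inr (Or.inr (Or.inr ⟨hpe.symm, hse.symm, h⟩))
    · rcases hsuc with h | h
      · exact Or.inr (Or.inr (Or.inl ⟨hpe.symm, ⟨h, fun hss => hse (subset_antisymm h hss)⟩⟩))
      · exact Or.inl (Or.inr (Or.inl ⟨hpe, ⟨h, fun hss => hse (subset_antisymm hss h)⟩⟩))
  · rcases hpre with h | h
    · exact Or.inl (Or.inl ⟨h, fun hss => hpe (subset_antisymm h hss)⟩)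
    · exact Or.inr (Or.inl ⟨h, fun hss => hpe ((subset_antisymm hss h))⟩)

lemma preS_subset_iff {P Q : Ipomset E A} {f : E → E} (hf : IsIpoIso P Q f)
    {x y : E} (hx : x ∈ P.events) (hy : y ∈ P.events) :
    preS P x ⊆ preS P y ↔ preS Q (f x) ⊆ preS Q (f y) := by
  constructor
  · intro h w hw
    rcases mem_preS.mp hw with ⟨hwe, hwl⟩
    obtain ⟨z, hz, rfl⟩ := hf.surj w hwe
    have hzx : P.lt z x := (hf.lt_iff z hz x hx).mp hwl
    have hzy : z ∈ preS P y := h (mem_preS.mpr ⟨hz, hzx⟩)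
    exact mem_preS.mpr ⟨hf.maps z hz, (hf.lt_iff z hz y hy).mpr (mem_preS.mp hzy).2⟩
  · intro h z hz
    rcases mem_preS.mp hz with ⟨hze, hzl⟩
    have : f z ∈ preS Q (f y) :=
      h (mem_preS.mpr ⟨hf.maps z hze, (hf.lt_iff z hze x hx).mpr hzl⟩)
    exact mem_preS.mpr ⟨hze, (hf.lt_iff z hze y hy).mp (mem_preS.mp this).2⟩

lemma sucS_subset_iff {P Q : Ipomset E A} {f : E → E} (hf : IsIpoIso P Q f)
    {x y : E} (hx : x ∈ P.events) (hy : y ∈ P.events) :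
    sucS P x ⊆ sucS P y ↔ sucS Q (f x) ⊆ sucS Q (f y) := by
  constructor
  · intro h w hw
    rcases mem_sucS.mp hw with ⟨hwe, hwl⟩
    obtain ⟨z, hz, rfl⟩ := hf.surj w hwe
    have hzx : P.lt x z := (hf.lt_iff x hx z hz).mp hwl
    have hzy : z ∈ sucS P y := h (mem_sucS.mpr ⟨hz, hzx⟩)
    exact mem_sucS.mpr ⟨hf.maps z hz, (hf.lt_iff y hy z hz).mpr (mem_sucS.mp hzy).2⟩
  · intro h z hz
    rcases mem_sucS.mp hz with ⟨hze, hzl⟩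
    have : f z ∈ sucS Q (f y) :=
      h (mem_sucS.mpr ⟨hf.maps z hze, (hf.lt_iff x hx z hze).mpr hzl⟩)
    exact mem_sucS.mpr ⟨hze, (hf.lt_iff y hy z hze).mp (mem_sucS.mp this).2⟩

lemma preS_eq_iff {P Q : Ipomset E A} {f : E → E} (hf : IsIpoIso P Q f)
    {x y : E} (hx : x ∈ P.events) (hy : y ∈ P.events) :
    preS P x = preS P y ↔ preS Q (f x) = preS Q (f y) := by
  rw [subset_antisymm_iff, subset_antisymm_iff, preS_subset_iff hf hx hy,
    preS_subset_iff hf hy hx]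

lemma sucS_eq_iff {P Q : Ipomset E A} {f : E → E} (hf : IsIpoIso P Q f)
    {x y : E} (hx : x ∈ P.events) (hy : y ∈ P.events) :
    sucS P x = sucS P y ↔ sucS Q (f x) = sucS Q (f y) := by
  rw [subset_antisymm_iff, subset_antisymm_iff, sucS_subset_iff hf hx hy,
    sucS_subset_iff hf hy hx]

lemma preS_ssubset_iff {P Q : Ipomset E A} {f : E → E} (hf : IsIpoIso P Q f)
    {x y : E} (hx : x ∈ P.events) (hy : y ∈ P.events) :
    preS P x ⊂ preS P y ↔ preS Q (f x) ⊂ preS Q (f y) := by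
  rw [Finset.ssubset_iff_subset_ne, Finset.ssubset_iff_subset_ne,
    preS_subset_iff hf hx hy, Ne, Ne, preS_eq_iff hf hx hy]

lemma sucS_ssubset_iff {P Q : Ipomset E A} {f : E → E} (hf : IsIpoIso P Q f)
    {x y : E} (hx : x ∈ P.events) (hy : y ∈ P.events) :
    sucS P x ⊂ sucS P y ↔ sucS Q (f x) ⊂ sucS Q (f y) := by
  rw [Finset.ssubset_iff_subset_ne, Finset.ssubset_iff_subset_ne,
    sucS_subset_iff hf hx hy, Ne, Ne, sucS_eq_iff hf hx hy]

lemma linOrd_iff {P Q : Ipomset E A} {f : E → E} (hf : IsIpoIso P Q f)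
    {x y : E} (hx : x ∈ P.events) (hy : y ∈ P.events) :
    linOrd P x y ↔ linOrd Q (f x) (f y) := by
  constructor
  · rintro (h | ⟨e1, h⟩ | ⟨e1, e2, h⟩)
    · exact Or.inl ((preS_ssubset_iff hf hx hy).mp h)
    · exact Or.inr (Or.inl ⟨(preS_eq_iff hf hx hy).mp e1,
        (sucS_ssubset_iff hf hy hx).mp h⟩)
    · refine Or.inr (Or.inr ⟨(preS_eq_iff hf hx hy).mp e1,
        (sucS_eq_iff hf hx hy).mp e2, ?_⟩)
      exact (hf.evord_iff x hx y hy (not_lt_of_sucS_eq hy e2)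
        (not_lt_of_preS_eq hy e1)).mp h
  · rintro (h | ⟨e1, h⟩ | ⟨e1, e2, h⟩)
    · exact Or.inl ((preS_ssubset_iff hf hx hy).mpr h)
    · exact Or.inr (Or.inl ⟨(preS_eq_iff hf hx hy).mpr e1,
        (sucS_ssubset_iff hf hy hx).mpr h⟩)
    · have e1' := (preS_eq_iff hf hx hy).mpr e1
      have e2' := (sucS_eq_iff hf hx hy).mpr e2
      refine Or.inr (Or.inr ⟨e1', e2', ?_⟩)
      exact (hf.evord_iff x hx y hy (not_lt_of_sucS_eq hy e2')
        (not_lt_of_preS_eq hy e1')).mpr h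

open scoped Classical in
/-- The set of `linOrd`-predecessors of `x` among the events of `P`. -/
noncomputable def predSet (P : Ipomset E A) (x : E) : Finset E :=
  P.events.filter (fun z => linOrd P z x)

lemma mem_predSet {P : Ipomset E A} {x z : E} :
    z ∈ predSet P x ↔ z ∈ P.events ∧ linOrd P z x := by
  simp [predSet]

lemma card_lt_of_linOrd {P : Ipomset E A} {u v : E}
    (hu : u ∈ P.events) (h : linOrd P u v) :
    (predSet P u).card < (predSet P v).card := by
  apply Finset.card_lt_card
  constructor
  · intro z hz
    rcases mem_predSet.mp hz with ⟨hze, hzl⟩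
    exact mem_predSet.mpr ⟨hze, linOrd_trans P hzl h⟩
  · intro hsub
    have : u ∈ predSet P u := hsub (mem_predSet.mpr ⟨hu, h⟩)
    exact linOrd_irrefl P u (mem_predSet.mp this).2

lemma eq_of_card_predSet {P : Ipomset E A} (hP : P.Interval) {u v : E}
    (hu : u ∈ P.events) (hv : v ∈ P.events)
    (h : (predSet P u).card = (predSet P v).card) : u = v := by
  by_contra hne
  rcases linOrd_total P hP hu hv hne with hl | hl
  · exact absurd h (Nat.ne_of_lt (card_lt_of_linOrd hu hl))
  · exact absurd h.symm (Nat.ne_of_lt (card_lt_of_linOrd hv hl))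

lemma card_predSet_eq {P Q : Ipomset E A} {f : E → E} (hf : IsIpoIso P Q f)
    {x : E} (hx : x ∈ P.events) :
    (predSet P x).card = (predSet Q (f x)).card := by
  apply Finset.card_bij (fun z _ => f z)
  · intro z hz
    rcases mem_predSet.mp hz with ⟨hze, hzl⟩
    exact mem_predSet.mpr ⟨hf.maps z hze, (linOrd_iff hf hze hx).mp hzl⟩
  · intro z₁ hz₁ z₂ hz₂ heq
    exact hf.inj z₁ (mem_predSet.mp hz₁).1 z₂ (mem_predSet.mp hz₂).1 heq
  · intro w hw
    rcases mem_predSet.mp hw with ⟨hwe, hwl⟩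
    obtain ⟨z, hz, rfl⟩ := hf.surj w hwe
    exact ⟨z, mem_predSet.mpr ⟨hz, (linOrd_iff hf hz hx).mpr hwl⟩, rfl⟩

/-- Between any two (interval) ipomsets there is at most one
isomorphism: if `f` and `g` are both isomorphisms from `P` to `Q`, then `f = g`
(as maps on the events of `P`). -/
theorem iso_unique (P Q : Ipomset E A) (hP : P.Interval) (hQ : Q.Interval)
    (f g : E → E) (hf : IsIpoIso P Q f) (hg : IsIpoIso P Q g) :
    ∀ x ∈ P.events, f x = g x := by
  intro x hx
  exact eq_of_card_predSet hQ (hf.maps x hx) (hg.maps x hx)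
    (by rw [← card_predSet_eq hf hx, card_predSet_eq hg hx])
end

section
/- For every coherent word P_1…P_n of starters and terminators there is a coherent word Q_1…Q_n such that Q_1 = P_1 and, for all i = 2,…,n, P_i ≅ Q_i and T_{Q_{i−1}} = S_{Q_i} = Q_{i−1} ∩ Q_i (equality on the overlapping events). -/
set_option maxHeartbeats 1000000

universe u v w

variable {E : Type u} {A : Type v}

/-! Representatives are chosen letter by letter. If `Q` represents the previous letter and `P`
is the next one, an isomorphism `T_Q ≅ S_P` is an injection defined on the finite set `T_Q`.
As `E` is infinite, it extends to a permutation of `E` that also sends the other events of `Q`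
outside `P`. Renaming the events of `P` along the inverse permutation makes `S_P` literally
equal to `T_Q` and cuts the overlap with `Q` down to `T_Q`. -/

attribute [ext] Conclist

section Relabelling

variable {E : Type u} {A : Type v}

theorem ClIso.refl (U : Conclist E A) : ClIso U U :=
  ⟨id, fun _ hx => hx, fun _ _ _ _ h => h, fun y hy => ⟨y, hy, rfl⟩, fun _ _ => rfl,
    fun _ _ _ _ => Iff.rfl⟩

theorem ClIso.trans {U V W : Conclist E A} : ClIso U V → ClIso V W → ClIso U W := by
  rintro ⟨f, hf⟩ ⟨g, hg⟩
  refine ⟨g ∘ f, fun x hx => hg.maps _ (hf.maps x hx), fun x hx y hy h =>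
    hf.inj x hx y hy (hg.inj _ (hf.maps x hx) _ (hf.maps y hy) h), fun z hz => ?_,
    fun x hx => ?_, fun x hx y hy => ?_⟩
  · obtain ⟨y, hy, rfl⟩ := hg.surj z hz
    obtain ⟨x, hx, rfl⟩ := hf.surj y hy
    exact ⟨x, hx, rfl⟩
  · rw [Function.comp_apply, hg.lab_eq _ (hf.maps x hx), hf.lab_eq x hx]
  · exact (hf.evord_iff x hx y hy).trans (hg.evord_iff _ (hf.maps x hx) _ (hf.maps y hy))

namespace Ipomset

def map (σ : Equiv.Perm E) (P : Ipomset E A) : Ipomset E A where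
  events := P.events.map σ.toEmbedding
  lt x y := P.lt (σ.symm x) (σ.symm y)
  evord x y := P.evord (σ.symm x) (σ.symm y)
  src := P.src.map σ.toEmbedding
  tgt := P.tgt.map σ.toEmbedding
  lab x := P.lab (σ.symm x)
  lt_mem h := by simpa only [Finset.mem_map_equiv] using P.lt_mem h
  evord_mem h := by simpa only [Finset.mem_map_equiv] using P.evord_mem h
  lt_irrefl _ := P.lt_irrefl _
  lt_trans := P.lt_trans
  evord_irrefl _ := P.evord_irrefl _
  evord_trans := P.evord_trans
  order_total hx hy hxy := P.order_total (Finset.mem_map_equiv.1 hx)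
    (Finset.mem_map_equiv.1 hy) (σ.symm.injective.ne hxy)
  src_sub := Finset.map_subset_map.2 P.src_sub
  tgt_sub := Finset.map_subset_map.2 P.tgt_sub
  src_min hx := P.src_min (Finset.mem_map_equiv.1 hx)
  tgt_max hx := P.tgt_max (Finset.mem_map_equiv.1 hx)

variable (σ : Equiv.Perm E) (P : Ipomset E A)

@[simp]
theorem map_one : P.map 1 = P := by
  cases P
  simp [map, Equiv.Perm.one_def, Finset.map_refl]

theorem isIpoIso_map : IsIpoIso P (P.map σ) σ where
  maps x hx := by simpa [map] using hx
  inj x _ y _ h := σ.injective h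
  surj y hy := ⟨σ.symm y, Finset.mem_map_equiv.1 hy, σ.apply_symm_apply y⟩
  src_iff x _ := by simp [map]
  tgt_iff x _ := by simp [map]
  lab_eq x _ := by simp [map]
  lt_iff x _ y _ := by simp [map]
  evord_iff x _ y _ _ _ := by simp [map]

theorem clIso_tgtIface_map [DecidableEq E] : ClIso (P.map σ).tgtIface P.tgtIface :=
  ⟨σ.symm, fun x hx => Finset.mem_map_equiv.1 hx, fun x _ y _ h => σ.symm.injective h,
    fun y hy => ⟨σ y, by simpa [tgtIface, map] using hy, σ.symm_apply_apply y⟩,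
    fun x _ => by simp [tgtIface, map], fun x _ y _ => by simp [tgtIface, map]⟩

end Ipomset

theorem StepLetter.map {P : Ipomset E A} (hP : StepLetter P) (σ : Equiv.Perm E) :
    StepLetter (P.map σ) := by
  rcases hP with ⟨hd, ht⟩ | ⟨hd, hs⟩
  · exact Or.inl ⟨fun x y => hd _ _, congrArg (Finset.map σ.toEmbedding) ht⟩
  · exact Or.inr ⟨fun x y => hd _ _, congrArg (Finset.map σ.toEmbedding) hs⟩

end Relabelling

section Renaming

variable {E : Type u}

theorem exists_injOn_forall_notMem [Infinite E] (s F : Finset E) :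
    ∃ j : E → E, Set.InjOn j s ∧ ∀ x ∈ s, j x ∉ F := by
  classical
  have : Infinite ((F : Set E)ᶜ : Set E) := F.finite_toSet.infinite_compl.to_subtype
  obtain ⟨e⟩ : Nonempty (s ↪ ((F : Set E)ᶜ : Set E)) :=
    (Cardinal.le_def _ _).1 ((Cardinal.lt_aleph0_of_finite _).le.trans (Cardinal.aleph0_le_mk _))
  refine ⟨fun x => if hx : x ∈ s then e ⟨x, hx⟩ else x, fun x hx y hy h => ?_, fun x hx => ?_⟩
  · simp only [Finset.mem_coe] at hx hy
    simp only [dif_pos hx, dif_pos hy] at h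
    exact congrArg Subtype.val (e.injective (Subtype.ext h))
  · simp only [dif_pos hx]
    exact fun h => (e ⟨x, hx⟩).2 (Finset.mem_coe.2 h)

theorem exists_perm_eqOn_of_injOn [Infinite E] {s : Set E} (hs : s.Finite) {g : E → E}
    (hg : Set.InjOn g s) : ∃ τ : Equiv.Perm E, Set.EqOn τ g s := by
  obtain ⟨τ, hτ⟩ := Cardinal.extend_function_of_lt ⟨s.domRestrict g, hg.injective⟩
    (hs.lt_aleph0.trans_le (Cardinal.aleph0_le_mk E)) ⟨Equiv.refl E⟩
  exact ⟨τ, fun x hx => hτ ⟨x, hx⟩⟩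

theorem exists_perm_extend_forall_notMem [Infinite E] {s t F : Finset E} {f : E → E}
    (hf : Set.InjOn f s) (hfF : ∀ x ∈ s, f x ∈ F) :
    ∃ τ : Equiv.Perm E, (∀ x ∈ s, τ x = f x) ∧ ∀ x ∈ t, x ∉ s → τ x ∉ F := by
  classical
  obtain ⟨j, hj, hjF⟩ := exists_injOn_forall_notMem t F
  have hg : Set.InjOn (s.piecewise f j) ↑(s ∪ t) := by
    intro x hx y hy h
    simp only [Finset.coe_union, Set.mem_union, Finset.mem_coe] at hx hy
    by_cases hxs : x ∈ s <;> by_cases hys : y ∈ s <;>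
      simp only [Finset.piecewise_eq_of_mem, Finset.piecewise_eq_of_notMem, hxs, hys,
        not_false_eq_true] at h
    · exact hf hxs hys h
    · exact absurd (h ▸ hfF x hxs) (hjF y (hy.resolve_left hys))
    · exact absurd (h ▸ hfF y hys) (hjF x (hx.resolve_left hxs))
    · exact hj (hx.resolve_left hxs) (hy.resolve_left hys) h
  obtain ⟨τ, hτ⟩ := exists_perm_eqOn_of_injOn (s ∪ t).finite_toSet hg
  refine ⟨τ, fun x hx => ?_, fun x hx hxs => ?_⟩
  · rw [hτ (by simp [hx]), s.piecewise_eq_of_mem _ _ hx]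
  · rw [hτ (by simp [hx]), s.piecewise_eq_of_notMem _ _ hxs]
    exact hjF x hx

end Renaming

section Composable

variable {E : Type u} {A : Type v} [DecidableEq E]

theorem Ipomset.tgtIface_eq_srcIface {P Q : Ipomset E A} (hev : P.tgt = Q.src)
    (hord : ∀ x ∈ P.tgt, ∀ y ∈ P.tgt, P.evord x y ↔ Q.evord x y)
    (hlab : ∀ x ∈ P.tgt, P.lab x = Q.lab x) : P.tgtIface = Q.srcIface := by
  ext x y
  · exact Finset.ext_iff.1 hev x
  · simp only [Ipomset.tgtIface, Ipomset.srcIface, ← hev]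
    exact ⟨fun ⟨hx, hy, h⟩ => ⟨hx, hy, (hord x hx y hy).1 h⟩,
      fun ⟨hx, hy, h⟩ => ⟨hx, hy, (hord x hx y hy).2 h⟩⟩
  · simp only [Ipomset.tgtIface, Ipomset.srcIface, ← hev]
    split_ifs with hx
    · rw [hlab x hx]
    · rfl

theorem exists_composable_map_of_clIso [Infinite E] {Q P : Ipomset E A}
    (φ : ClIso Q.tgtIface P.srcIface) : ∃ σ : Equiv.Perm E, Composable Q (P.map σ) := by
  obtain ⟨f, hf⟩ := φ
  have hfP : ∀ x ∈ Q.tgt, f x ∈ P.src := hf.maps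
  obtain ⟨τ, hτf, hτ⟩ := exists_perm_extend_forall_notMem (t := Q.events)
    (fun x hx y hy => hf.inj x hx y hy) fun x hx => P.src_sub (hfP x hx)
  refine ⟨τ.symm, Ipomset.tgtIface_eq_srcIface ?_ (fun x hx y hy => ?_) (fun x hx => ?_), ?_⟩
  · ext x
    simp only [Ipomset.map, Finset.mem_map_equiv, Equiv.symm_symm]
    refine ⟨fun hx => hτf x hx ▸ hfP x hx, fun h => ?_⟩
    obtain ⟨y, hy, hfy⟩ := hf.surj _ h
    rwa [← τ.injective ((hτf y hy).trans hfy)]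
  · have := hf.evord_iff x hx y hy
    simp only [Ipomset.tgtIface, Ipomset.srcIface, hx, hy, hfP x hx, hfP y hy, true_and] at this
    simp only [Ipomset.map, Equiv.symm_symm, hτf x hx, hτf y hy, this]
  · have := hf.lab_eq x hx
    simp only [Ipomset.tgtIface, Ipomset.srcIface, hx, hfP x hx, if_true, Option.some_inj] at this
    simp only [Ipomset.map, Equiv.symm_symm, hτf x hx, this]
  · ext x
    simp only [Ipomset.map, Finset.mem_inter, Finset.mem_map_equiv, Equiv.symm_symm]
    exact ⟨fun ⟨hx, hτx⟩ => by_contra fun h => hτ x hx h hτx,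
      fun hx => ⟨Q.tgt_sub hx, hτf x hx ▸ P.src_sub (hfP x hx)⟩⟩

end Composable

theorem List.Forall₂.forall_mem {α β : Type*} {R : α → β → Prop} {p : β → Prop}
    {l₁ : List α} {l₂ : List β} (h : Forall₂ R l₁ l₂) (H : ∀ a ∈ l₁, ∀ b, R a b → p b) :
    ∀ b ∈ l₂, p b := by
  induction h with
  | nil => simp
  | cons hab _ ih =>
    simp only [List.mem_cons, forall_eq_or_imp] at H ⊢
    exact ⟨H.1 _ hab, ih H.2⟩

section Words

variable {E : Type u} {A : Type v} [DecidableEq E] [Infinite E]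

theorem exists_composable_relabelling (w : List (Ipomset E A)) {P Q : Ipomset E A}
    (hPQ : ClIso Q.tgtIface P.tgtIface)
    (hw : (P :: w).IsChain fun X Y => ClIso X.tgtIface Y.srcIface) :
    ∃ q, w.Forall₂ (fun X Y => ∃ σ : Equiv.Perm E, X.map σ = Y) q ∧
      (Q :: q).IsChain Composable := by
  induction w generalizing P Q with
  | nil => exact ⟨[], .nil, .singleton Q⟩
  | cons R w ih =>
    rw [List.isChain_cons_cons] at hw
    obtain ⟨σ, hσ⟩ := exists_composable_map_of_clIso (hPQ.trans hw.1)
    obtain ⟨q, hwq, hq⟩ := ih (R.clIso_tgtIface_map σ) hw.2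
    exact ⟨R.map σ :: q, .cons ⟨σ, rfl⟩ hwq, .cons_cons hσ hq⟩

end Words

/-- For every coherent word `P₁…Pₙ` of starters and terminators
there is a coherent word `Q₁…Qₙ` with `Q₁ = P₁`, `Pᵢ ≅ Qᵢ` for all `i`, and
`T_{Qᵢ₋₁} = S_{Qᵢ} = Qᵢ₋₁ ∩ Qᵢ` (equality on the overlapping events). -/
theorem coherent_word_overlapping_representatives [DecidableEq E] [Infinite E]
    (w : List (Ipomset E A)) (hw : Coherent w) :
    ∃ q : List (Ipomset E A), Coherent q ∧ q.length = w.length ∧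
      q.head? = w.head? ∧
      q.Chain' (fun X Y => X.tgtIface = Y.srcIface ∧ X.events ∩ Y.events = X.tgt) ∧
      ∀ (i : ℕ) (h1 : i < w.length) (h2 : i < q.length),
        IpoIso (w.get ⟨i, h1⟩) (q.get ⟨i, h2⟩) := by
  obtain ⟨hst, hch⟩ := hw
  cases w with
  | nil => exact ⟨[], ⟨by simp, .nil⟩, rfl, rfl, .nil, fun i h => absurd h (Nat.not_lt_zero i)⟩
  | cons P w =>
    obtain ⟨q, hwq, hq⟩ := exists_composable_relabelling w (ClIso.refl P.tgtIface) hch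
    have hrel : (P :: w).Forall₂ (fun X Y => ∃ σ : Equiv.Perm E, X.map σ = Y) (P :: q) :=
      .cons ⟨1, P.map_one⟩ hwq
    have hiso : (P :: w).Forall₂ IpoIso (P :: q) :=
      hrel.imp fun X _ ⟨σ, hY⟩ => ⟨σ, hY ▸ X.isIpoIso_map σ⟩
    refine ⟨P :: q, ⟨?_, ?_⟩, hrel.length_eq.symm, rfl, hq, (List.forall₂_iff_get.1 hiso).2⟩
    · exact hrel.forall_mem fun X hX _ ⟨σ, hY⟩ => hY ▸ (hst X hX).map σ
    · exact hq.imp fun _ _ (h : Composable _ _) => h.1 ▸ ClIso.refl _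
end
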